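/- Let f₊(x) = x + √(x² + x), let p_1,…,p_M ∈ [0,1] with ∑_b p_b = 1, and let n̄_1,…,n̄_M ≥ 0 with ∑_b n̄_b = N̄. Then ∑_{b=1}^M p_b f₊(n̄_b) ≤ f₊((max_b p_b) · N̄) ≤ f₊(N̄). -/
import Mathlib


open Finset

lemma fplus_mono {s t : ℝ} (hs : 0 ≤ s) (hst : s ≤ t) :
    s + Real.sqrt (s ^ 2 + s) ≤ t + Real.sqrt (t ^ 2 + t) := by
  have : s ^ 2 + s ≤ t ^ 2 + t := by nlinarith
  exact add_le_add hst (Real.sqrt_le_sqrt this)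

/-- Optimal photon-number allocation: for weights `p_b` summing to 1 and photon numbers
`n̄_b ≥ 0` summing to `N̄`, `∑_b p_b f₊(n̄_b) ≤ f₊((max_b p_b) N̄) ≤ f₊(N̄)`. -/
theorem stmt_4 (M : ℕ) (hM : 0 < M) (p n : Fin M → ℝ) (N : ℝ)
    (hp0 : ∀ b, 0 ≤ p b) (hp1 : ∀ b, p b ≤ 1) (hpsum : ∑ b, p b = 1)
    (hn : ∀ b, 0 ≤ n b) (hnsum : ∑ b, n b = N) :
    (∑ b, p b * (n b + Real.sqrt ((n b) ^ 2 + n b))) ≤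
      ((Finset.univ.sup' (Finset.univ_nonempty_iff.mpr (Fin.pos_iff_nonempty.mp hM)) p) * N +
        Real.sqrt (((Finset.univ.sup' (Finset.univ_nonempty_iff.mpr (Fin.pos_iff_nonempty.mp hM)) p) * N) ^ 2 +
          (Finset.univ.sup' (Finset.univ_nonempty_iff.mpr (Fin.pos_iff_nonempty.mp hM)) p) * N)) ∧
    ((Finset.univ.sup' (Finset.univ_nonempty_iff.mpr (Fin.pos_iff_nonempty.mp hM)) p) * N +
        Real.sqrt (((Finset.univ.sup' (Finset.univ_nonempty_iff.mpr (Fin.pos_iff_nonempty.mp hM)) p) * N) ^ 2 +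
          (Finset.univ.sup' (Finset.univ_nonempty_iff.mpr (Fin.pos_iff_nonempty.mp hM)) p) * N)) ≤
      N + Real.sqrt (N ^ 2 + N) := by
  set ne := Finset.univ_nonempty_iff.mpr (Fin.pos_iff_nonempty.mp hM)
  set q := Finset.univ.sup' ne p with hq
  have hNnn : 0 ≤ N := hnsum ▸ Finset.sum_nonneg fun b _ => hn b
  have hq1 : q ≤ 1 := Finset.sup'_le _ _ fun b _ => hp1 b
  have hqge : ∀ b, p b ≤ q := fun b => Finset.le_sup' p (Finset.mem_univ b)
  set s := ∑ b, p b * n b with hs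
  have hsnn : 0 ≤ s := Finset.sum_nonneg fun b _ => mul_nonneg (hp0 b) (hn b)
  have hsq : s ≤ q * N := by
    rw [hs, ← hnsum, Finset.mul_sum]
    exact Finset.sum_le_sum fun b _ => mul_le_mul_of_nonneg_right (hqge b) (hn b)
  -- Jensen via Cauchy–Schwarz
  have key : (∑ b, p b * (n b + Real.sqrt ((n b) ^ 2 + n b))) ≤ s + Real.sqrt (s ^ 2 + s) := by
    have h1 : (∑ b, p b * (n b + Real.sqrt ((n b) ^ 2 + n b)))
        = s + ∑ b, Real.sqrt (p b * n b) * Real.sqrt (p b * n b + p b) := by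
      rw [hs, ← Finset.sum_add_distrib]
      refine Finset.sum_congr rfl fun b _ => ?_
      have e1 : Real.sqrt (p b * n b) * Real.sqrt (p b * n b + p b)
          = Real.sqrt (p b ^ 2 * (n b ^ 2 + n b)) := by
        rw [← Real.sqrt_mul (mul_nonneg (hp0 b) (hn b))]
        ring_nf
      rw [e1, Real.sqrt_mul (sq_nonneg _), Real.sqrt_sq (hp0 b)]
      ring
    rw [h1]
    gcongr
    have cs := Finset.sum_mul_sq_le_sq_mul_sq Finset.univ
      (fun b => Real.sqrt (p b * n b)) (fun b => Real.sqrt (p b * n b + p b))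
    have e2 : (∑ b, Real.sqrt (p b * n b) ^ 2) = s := by
      rw [hs]; exact Finset.sum_congr rfl fun b _ => Real.sq_sqrt (mul_nonneg (hp0 b) (hn b))
    have e3 : (∑ b, Real.sqrt (p b * n b + p b) ^ 2) = s + 1 := by
      have : (∑ b, Real.sqrt (p b * n b + p b) ^ 2) = ∑ b, (p b * n b + p b) :=
        Finset.sum_congr rfl fun b _ => Real.sq_sqrt
          (add_nonneg (mul_nonneg (hp0 b) (hn b)) (hp0 b))
      rw [this, Finset.sum_add_distrib, hpsum, hs]
    rw [e2, e3] at cs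
    have hnn : 0 ≤ ∑ b, Real.sqrt (p b * n b) * Real.sqrt (p b * n b + p b) :=
      Finset.sum_nonneg fun b _ => mul_nonneg (Real.sqrt_nonneg _) (Real.sqrt_nonneg _)
    have : (∑ b, Real.sqrt (p b * n b) * Real.sqrt (p b * n b + p b)) ^ 2 ≤ s ^ 2 + s := by
      nlinarith
    calc (∑ b, Real.sqrt (p b * n b) * Real.sqrt (p b * n b + p b))
        = Real.sqrt ((∑ b, Real.sqrt (p b * n b) * Real.sqrt (p b * n b + p b)) ^ 2) :=
          (Real.sqrt_sq hnn).symm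
      _ ≤ Real.sqrt (s ^ 2 + s) := Real.sqrt_le_sqrt this
  refine ⟨key.trans (fplus_mono hsnn hsq), fplus_mono (hsnn.trans hsq) ?_⟩
  nlinarith
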